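/- arXiv:2312.01303 — 2 statements merged into one kernel-verified Lean document; each statement's English description precedes it below -/
import Mathlib

section
/- Let q be an odd prime power, F = GF(q), and λ, μ ∈ F \ {0}. Define Δ_λ = { (e1 + λe2) ⊗ w, (e1 − λe2) ⊗ w, (e1 + λ⁻¹e2) ⊗ w, (e1 − λ⁻¹e2) ⊗ w : w ∈ W \ {0} } ⊆ V ⊗ W, where V = F² with basis {e1,e2} and W = F^m with m ≥ 2. Then Δ_λ = Δ_μ if and only if μ ∈ {λ, −λ, λ⁻¹, −λ⁻¹}. -/
open TensorProduct

/-- The suborbit `Δ_λ`: simple tensors `(e₁ ± λe₂) ⊗ w` and `(e₁ ± λ⁻¹e₂) ⊗ w`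
for nonzero `w ∈ W = F^m`. -/
def Delta (F : Type*) [Field F] (m : ℕ) (l : F) :
    Set (TensorProduct F (Fin 2 → F) (Fin m → F)) :=
  {x | ∃ w : Fin m → F, w ≠ 0 ∧
    (x = (![(1 : F), 0] + l • ![(0 : F), 1]) ⊗ₜ[F] w ∨
     x = (![(1 : F), 0] - l • ![(0 : F), 1]) ⊗ₜ[F] w ∨
     x = (![(1 : F), 0] + l⁻¹ • ![(0 : F), 1]) ⊗ₜ[F] w ∨
     x = (![(1 : F), 0] - l⁻¹ • ![(0 : F), 1]) ⊗ₜ[F] w)}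

/-- The slope of a simple tensor with nonzero second factor is determined. -/
lemma slope_eq {F : Type*} [Field F] {m : ℕ} (a b : F) (w w' : Fin m → F) (hw : w ≠ 0)
    (h : (![(1:F),0] + a • ![(0:F),1]) ⊗ₜ[F] w = (![(1:F),0] + b • ![(0:F),1]) ⊗ₜ[F] w') :
    a = b := by
  have key : ∀ i : Fin 2, ![(1:F), a] i • w = ![(1:F), b] i • w' := by
    intro i
    have := congrArg ((TensorProduct.lid F (Fin m → F)).toLinearMap.comp
      (LinearMap.rTensor (Fin m → F) (LinearMap.proj i))) h
    simpa using this
  have h0 := key 0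
  have h1 := key 1
  simp at h0 h1
  subst h0
  exact smul_left_injective F hw h1

lemma Delta_neg (F : Type*) [Field F] (m : ℕ) (l : F) :
    Delta F m (-l) = Delta F m l := by
  ext x
  simp only [Delta, Set.mem_setOf_eq, inv_neg, neg_smul, sub_neg_eq_add, sub_eq_add_neg,
    neg_neg]
  constructor <;> rintro ⟨w, hw, H⟩ <;> exact ⟨w, hw, by tauto⟩

lemma Delta_inv (F : Type*) [Field F] (m : ℕ) (l : F) :
    Delta F m l⁻¹ = Delta F m l := by
  ext x
  simp only [Delta, Set.mem_setOf_eq, inv_inv]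
  constructor <;> rintro ⟨w, hw, H⟩ <;> exact ⟨w, hw, by tauto⟩

/-- For nonzero `λ, μ` in a finite field of odd order, `Δ_λ = Δ_μ` iff
`μ ∈ {λ, -λ, λ⁻¹, -λ⁻¹}`. -/
theorem Delta_eq_iff (F : Type*) [Field F] [Fintype F] (hodd : Odd (Fintype.card F))
    (m : ℕ) (hm : 2 ≤ m) (lam mu : F) (hlam : lam ≠ 0) (hmu : mu ≠ 0) :
    Delta F m lam = Delta F m mu ↔
      (mu = lam ∨ mu = -lam ∨ mu = lam⁻¹ ∨ mu = -lam⁻¹) := by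
  constructor
  · intro h
    set w0 : Fin m → F := Pi.single ⟨0, by omega⟩ 1 with hw0def
    have hw0 : w0 ≠ 0 := by
      intro hc
      have := congrFun hc ⟨0, by omega⟩
      simp [hw0def] at this
    have hx : (![(1:F),0] + lam • ![(0:F),1]) ⊗ₜ[F] w0 ∈ Delta F m lam :=
      ⟨w0, hw0, Or.inl rfl⟩
    rw [h] at hx
    obtain ⟨w, hw, H⟩ := hx
    have sub_rw : ∀ (c : F) (v : Fin m → F),
        (![(1:F),0] - c • ![(0:F),1]) ⊗ₜ[F] v = (![(1:F),0] + (-c) • ![(0:F),1]) ⊗ₜ[F] v := by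
      intro c v; rw [neg_smul, sub_eq_add_neg]
    rcases H with H | H | H | H
    · exact Or.inl (slope_eq lam mu w0 w hw0 H).symm
    · rw [sub_rw] at H
      have := slope_eq lam (-mu) w0 w hw0 H
      exact Or.inr (Or.inl (by rw [this]; ring))
    · have := slope_eq lam mu⁻¹ w0 w hw0 H
      exact Or.inr (Or.inr (Or.inl (by rw [this, inv_inv])))
    · rw [sub_rw] at H
      have := slope_eq lam (-mu⁻¹) w0 w hw0 H
      refine Or.inr (Or.inr (Or.inr ?_))
      rw [this]
      simp [inv_neg]
  · rintro (rfl | rfl | rfl | rfl)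
    · rfl
    · exact (Delta_neg F m lam).symm
    · exact (Delta_inv F m lam).symm
    · calc Delta F m lam = Delta F m lam⁻¹ := (Delta_inv F m lam).symm
        _ = Delta F m (-lam⁻¹) := (Delta_neg F m lam⁻¹).symm
end

section
/- Let q > 4 be a prime power, m ≥ 2, let μ1, μ2, μ3, μ4 be distinct elements of GF(q), let U = GF(q)^{2m} identified with V ⊗ W (V = GF(q)², W = GF(q)^m), and let Δ = {(e1 + μ_i e2) ⊗ w : 1 ≤ i ≤ 4, w ∈ W \ {0}}. For x ∈ U and i ∈ {1,2,3,4} let ℓ_i(x) = {α ∈ U : π_i(α) = π_i(x)}, where π_1, π_2 are the coordinates of the decomposition U = (⟨e1+μ1e2⟩⊗W) ⊕ (⟨e1+μ2e2⟩⊗W) and π_3, π_4 those of U = (⟨e1+μ3e2⟩⊗W) ⊕ (⟨e1+μ4e2⟩⊗W). Then every clique of size q^m in the Cayley graph Cay(U, Δ) equals ℓ_i(x) for some i ∈ {1,2,3,4} and x ∈ U. -/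
/-!
Identify `F² ⊗ W` with `W × W`, so that `⟨e₁ + μᵢ e₂⟩ ⊗ W` becomes the graph `Lᵢ` of `μᵢ • id`.
Fix a vertex `a` of a clique `D`. In a triangle `a, b, d` whose sides at `a` have different
slopes, the third side has a third slope and the three first coordinates are proportional. So if
two neighbours of `a` in `D` lie on different lines through `a`, all of `D` lies in the plane
`a + ⟨w⟩ × ⟨w⟩` for one `w ≠ 0`; that plane has `q²` points, one of which, `a + (0, w)`, is not
adjacent to `a`, so `|D| < q² ≤ q^m`. Hence `D ⊆ a + Lᵢ` for a single `i`, and comparing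
cardinalities gives equality.
-/

open TensorProduct

section TensorCoordinates

variable (F W : Type*) [Field F] [AddCommGroup W] [Module F W]

def finTwoTensorEquiv : (Fin 2 → F) ⊗[F] W ≃ₗ[F] W × W :=
  (TensorProduct.comm F _ _).trans
    ((TensorProduct.piScalarRight F F W (Fin 2)).trans (LinearEquiv.finTwoArrow F W))

@[simp]
lemma finTwoTensorEquiv_tmul (v : Fin 2 → F) (w : W) :
    finTwoTensorEquiv F W (v ⊗ₜ w) = (v 0 • w, v 1 • w) := by
  simp [finTwoTensorEquiv]

end TensorCoordinates

section SlopeLine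

variable {F W ι : Type*} [Field F] [AddCommGroup W] [Module F W] {μ : ι → F}

/-- Under `finTwoTensorEquiv`, the subspace `⟨e₁ + μᵢ e₂⟩ ⊗ W` of `F² ⊗ W` becomes
`slopeLine μ i ⊆ W × W`. -/
def slopeLine (μ : ι → F) (i : ι) : Submodule F (W × W) :=
  (μ i • LinearMap.id : W →ₗ[F] W).graph

@[simp]
lemma mem_slopeLine {i : ι} {u : W × W} : u ∈ slopeLine μ i ↔ u.2 = μ i • u.1 :=
  LinearMap.mem_graph_iff _ _

lemma fst_ne_zero_of_mem_slopeLine {i : ι} {u : W × W} (hu : u ∈ slopeLine μ i) (hu₀ : u ≠ 0) :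
    u.1 ≠ 0 := by
  rw [mem_slopeLine] at hu
  exact fun h => hu₀ (Prod.ext h (by rw [hu, h, smul_zero]; rfl))

lemma eq_of_mem_slopeLine (hμ : Function.Injective μ) {i j : ι} {u : W × W}
    (hi : u ∈ slopeLine μ i) (hj : u ∈ slopeLine μ j) (hu₀ : u ≠ 0) : i = j := by
  have hu₁ := fst_ne_zero_of_mem_slopeLine hi hu₀
  rw [mem_slopeLine] at hi hj
  have : (μ i - μ j) • u.1 = 0 := by rw [sub_smul, ← hi, ← hj, sub_self]
  exact hμ (sub_eq_zero.1 ((smul_eq_zero.1 this).resolve_right hu₁))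

lemma fst_mem_span_of_sub_mem_slopeLine (hμ : Function.Injective μ) {i j k : ι} {u v : W × W}
    (hu : u ∈ slopeLine μ i) (hu₀ : u ≠ 0) (hv : v ∈ slopeLine μ j) (hij : i ≠ j)
    (huv : u - v ∈ slopeLine μ k) : v.1 ∈ F ∙ u.1 := by
  have hjk : j ≠ k := by
    rintro rfl
    exact hij (eq_of_mem_slopeLine hμ hu (by simpa using add_mem huv hv) hu₀)
  rw [mem_slopeLine] at hu hv huv
  have h : (μ j - μ k) • v.1 = (μ i - μ k) • u.1 := by
    simp only [Prod.fst_sub, Prod.snd_sub, hu, hv] at huv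
    linear_combination (norm := module) -huv
  refine Submodule.mem_span_singleton.2 ⟨(μ j - μ k)⁻¹ * (μ i - μ k), ?_⟩
  rw [mul_smul, ← h, smul_smul, inv_mul_cancel₀ (sub_ne_zero.2 (hμ.ne hjk)), one_smul]

lemma ncard_setOf_sub_mem_slopeLine (i : ι) (a : W × W) :
    {α | α - a ∈ slopeLine μ i}.ncard = Nat.card W := by
  have : {α | α - a ∈ slopeLine μ i} = Set.range fun w : W => a + (w, μ i • w) := by
    ext α
    simp only [Set.mem_ofPred_eq, mem_slopeLine, Set.mem_range]
    constructor
    · intro h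
      exact ⟨(α - a).1, by rw [← h, Prod.mk.eta, add_sub_cancel]⟩
    · rintro ⟨w, rfl⟩
      simp
  rw [this, Set.ncard_range_of_injective]
  intro w w' h
  simpa using congrArg Prod.fst h

lemma finTwoTensorEquiv_mem_slopeLine_iff {i : ι} {u : (Fin 2 → F) ⊗[F] W} :
    finTwoTensorEquiv F W u ∈ slopeLine μ i ↔ ∃ w, u = (![1, 0] + μ i • ![0, 1]) ⊗ₜ[F] w := by
  constructor
  · intro h
    refine ⟨(finTwoTensorEquiv F W u).1, (finTwoTensorEquiv F W).injective ?_⟩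
    simpa [Prod.ext_iff] using h
  · rintro ⟨w, rfl⟩
    simp

end SlopeLine

section Clique

variable {F W ι : Type*} [Field F] [AddCommGroup W] [Module F W] {μ : ι → F}
  {D : Set (W × W)}

lemma sub_mem_prod_span_of_notMem_slopeLine (hμ : Function.Injective μ)
    (hD : ∀ x ∈ D, ∀ y ∈ D, ∃ k, x - y ∈ slopeLine μ k) {a b c d : W × W} {i : ι}
    (ha : a ∈ D) (hb : b ∈ D) (hc : c ∈ D) (hd : d ∈ D) (hbi : b - a ∈ slopeLine μ i)
    (hba : b ≠ a) (hci : c - a ∉ slopeLine μ i) :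
    d - a ∈ (F ∙ (b - a).1).prod (F ∙ (b - a).1) := by
  obtain ⟨j, hcj⟩ := hD c hc a ha
  have hij : i ≠ j := by rintro rfl; exact hci hcj
  have hca : c - a ≠ 0 := fun h => hci (h ▸ zero_mem _)
  obtain ⟨l, hdl⟩ := hD d hd a ha
  have hfst : (d - a).1 ∈ F ∙ (b - a).1 := by
    by_cases hli : l = i
    · subst hli
      obtain ⟨k, hk⟩ := hD c hc d hd
      obtain ⟨k', hk'⟩ := hD b hb c hc
      have hdc := fst_mem_span_of_sub_mem_slopeLine hμ hcj hca hdl hij.symm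
        (by rwa [sub_sub_sub_cancel_right])
      have hcb := fst_mem_span_of_sub_mem_slopeLine hμ hbi (sub_ne_zero.2 hba) hcj hij
        (by rwa [sub_sub_sub_cancel_right])
      exact (Submodule.span_singleton_le_iff_mem _ _).2 hcb hdc
    · obtain ⟨k, hk⟩ := hD b hb d hd
      exact fst_mem_span_of_sub_mem_slopeLine hμ hbi (sub_ne_zero.2 hba) hdl (Ne.symm hli)
        (by rwa [sub_sub_sub_cancel_right])
  refine ⟨hfst, ?_⟩
  rw [mem_slopeLine.1 hdl]
  exact Submodule.smul_mem _ _ hfst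

lemma ncard_lt_of_forall_sub_mem_prod_span [Finite W]
    (hD : ∀ x ∈ D, ∀ y ∈ D, ∃ k, x - y ∈ slopeLine μ k) {a : W × W} (ha : a ∈ D) {w : W}
    (hw : w ≠ 0) (hDa : ∀ d ∈ D, d - a ∈ (F ∙ w).prod (F ∙ w)) :
    D.ncard < Nat.card F ^ 2 := by
  have hspan : Nat.card (F ∙ w) = Nat.card F :=
    Nat.card_congr (LinearEquiv.toSpanNonzeroSingleton F W w hw).toEquiv.symm
  have hP : (((F ∙ w).prod (F ∙ w) : Submodule F (W × W)) : Set (W × W)).ncard =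
      Nat.card F ^ 2 := by
    rw [Submodule.prod_coe, Set.ncard_prod, ← Nat.card_coe_set_eq, SetLike.coe_sort_coe, hspan,
      sq]
  have hsub : (· - a) '' D ⊆ ((F ∙ w).prod (F ∙ w) : Set (W × W)) \ {(0, w)} := by
    rintro _ ⟨d, hd, rfl⟩
    refine ⟨hDa d hd, fun h => hw ?_⟩
    obtain ⟨k, hk⟩ := hD d hd a ha
    have h : d - a = (0, w) := h
    rw [h, mem_slopeLine] at hk
    simpa using hk
  have hq : 0 < Nat.card F := hspan ▸ Nat.card_pos
  calc D.ncard = ((· - a) '' D).ncard := (Set.ncard_image_of_injective _ sub_left_injective).symm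
    _ ≤ (((F ∙ w).prod (F ∙ w) : Set (W × W)) \ {(0, w)}).ncard :=
      Set.ncard_le_ncard hsub (Set.toFinite _)
    _ < Nat.card F ^ 2 := by
      rw [Set.ncard_sdiff_singleton_of_mem
        (Submodule.mem_prod.2 ⟨zero_mem _, Submodule.mem_span_singleton_self w⟩), hP]
      exact Nat.sub_lt (by positivity) one_pos

theorem exists_eq_setOf_sub_mem_slopeLine [Finite W] (hμ : Function.Injective μ)
    (hD : ∀ x ∈ D, ∀ y ∈ D, ∃ k, x - y ∈ slopeLine μ k) (hcard : D.ncard = Nat.card W)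
    (hW : Nat.card F ^ 2 ≤ Nat.card W) : ∃ i a, D = {α | α - a ∈ slopeLine μ i} := by
  obtain ⟨a, ha⟩ : D.Nonempty := Set.nonempty_of_ncard_ne_zero (hcard ▸ Nat.card_pos.ne')
  by_cases hpure : ∃ i, ∀ d ∈ D, d - a ∈ slopeLine μ i
  · obtain ⟨i, hi⟩ := hpure
    refine ⟨i, a, Set.eq_of_subset_of_ncard_le hi ?_ (Set.toFinite _)⟩
    rw [ncard_setOf_sub_mem_slopeLine, hcard]
  push Not at hpure
  obtain ⟨k, -⟩ := hD a ha a ha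
  obtain ⟨b, hb, hbk⟩ := hpure k
  obtain ⟨i, hbi⟩ := hD b hb a ha
  obtain ⟨c, hc, hci⟩ := hpure i
  have hba : b - a ≠ 0 := fun h => hbk (h ▸ zero_mem _)
  have := ncard_lt_of_forall_sub_mem_prod_span hD ha (fst_ne_zero_of_mem_slopeLine hbi hba)
    fun d hd => sub_mem_prod_span_of_notMem_slopeLine hμ hD ha hb hc hd hbi
      (sub_ne_zero.1 hba) hci
  omega

end Clique

theorem cliques_of_cayley_graph_general (F : Type*) [Field F] [Fintype F]
    (m : ℕ) (hm : 2 ≤ m)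
    (μ : Fin 4 → F) (hμ : Function.Injective μ)
    (Δ : Set (TensorProduct F (Fin 2 → F) (Fin m → F)))
    (hΔ : Δ = {t | ∃ (i : Fin 4) (w : Fin m → F), w ≠ 0 ∧
      t = (![(1 : F), 0] + μ i • ![(0 : F), 1]) ⊗ₜ[F] w})
    (C : Set (TensorProduct F (Fin 2 → F) (Fin m → F)))
    (hclique : C.Pairwise fun u v => u - v ∈ Δ)
    (hcard : C.ncard = Fintype.card F ^ m) :
    ∃ (i : Fin 4) (x : TensorProduct F (Fin 2 → F) (Fin m → F)),
      C = {α | ∃ w : Fin m → F,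
        α - x = (![(1 : F), 0] + μ i • ![(0 : F), 1]) ⊗ₜ[F] w} := by
  set e := finTwoTensorEquiv F (Fin m → F)
  have hD : ∀ x ∈ e '' C, ∀ y ∈ e '' C, ∃ k, x - y ∈ slopeLine μ k := by
    rintro _ ⟨u, hu, rfl⟩ _ ⟨v, hv, rfl⟩
    rcases eq_or_ne u v with rfl | huv
    · exact ⟨0, by simp⟩
    obtain ⟨k, w, -, h⟩ := hΔ ▸ hclique hu hv huv
    exact ⟨k, by rw [← map_sub, finTwoTensorEquiv_mem_slopeLine_iff]; exact ⟨w, h⟩⟩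
  have hcardD : (e '' C).ncard = Nat.card (Fin m → F) := by
    rw [Set.ncard_image_of_injective _ e.injective, hcard, Nat.card_fun, Nat.card_fin,
      Nat.card_eq_fintype_card]
  have hW : Nat.card F ^ 2 ≤ Nat.card (Fin m → F) := by
    rw [Nat.card_fun, Nat.card_fin]
    exact Nat.pow_le_pow_right Nat.card_pos hm
  obtain ⟨i, a, hCa⟩ := exists_eq_setOf_sub_mem_slopeLine hμ hD hcardD hW
  refine ⟨i, e.symm a, Set.ext fun α => ?_⟩
  rw [Set.mem_ofPred_eq, ← finTwoTensorEquiv_mem_slopeLine_iff, map_sub, e.apply_symm_apply,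
    ← e.injective.mem_set_image, hCa, Set.mem_ofPred_eq]

/-- Let `q > 4` be a prime power (here: the order of the finite field `F`), `m ≥ 2`,
and `μ₁, μ₂, μ₃, μ₄` distinct elements of `F`. Let
`Δ = {(e₁ + μᵢe₂) ⊗ w : 1 ≤ i ≤ 4, w ≠ 0}` in `U = F² ⊗ F^m`. Then every clique of
size `q^m` in the Cayley graph `Cay(U, Δ)` is one of the sets
`ℓᵢ(x) = {α : α − x ∈ ⟨e₁ + μᵢe₂⟩ ⊗ W}`. -/
theorem cliques_of_cayley_graph (F : Type*) [Field F] [Fintype F]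
    (hq : 4 < Fintype.card F) (m : ℕ) (hm : 2 ≤ m)
    (μ : Fin 4 → F) (hμ : Function.Injective μ)
    (Δ : Set (TensorProduct F (Fin 2 → F) (Fin m → F)))
    (hΔ : Δ = {t | ∃ (i : Fin 4) (w : Fin m → F), w ≠ 0 ∧
      t = (![(1 : F), 0] + μ i • ![(0 : F), 1]) ⊗ₜ[F] w})
    (C : Set (TensorProduct F (Fin 2 → F) (Fin m → F)))
    (hclique : C.Pairwise fun u v => u - v ∈ Δ)
    (hcard : C.ncard = Fintype.card F ^ m) :
    ∃ (i : Fin 4) (x : TensorProduct F (Fin 2 → F) (Fin m → F)),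
      C = {α | ∃ w : Fin m → F,
        α - x = (![(1 : F), 0] + μ i • ![(0 : F), 1]) ⊗ₜ[F] w} :=
  cliques_of_cayley_graph_general F m hm μ hμ Δ hΔ C hclique hcard
end
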